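/- For a1, a2 in F4^ℓ with error index sets I1 = {i : a1_i ≠ 0, a2_i = 0}, I2 = {i : a1_i = 0, a2_i ≠ 0}, I3 = {i : a1_i ≠ 0, a2_i ≠ 0}, the sum-rank weight of a1*x + a2*x^2 equals 2|I1| + 2|I2| + |I3|. -/

import Mathlib

open scoped Classical

noncomputable section

/-- The field with 4 elements. -/
abbrev F4 := GaloisField 2 2

noncomputable instance : Fintype F4 := Fintype.ofFinite _

/-- The `F2`-linear map `x ↦ x1*x + x2*x^2` on `F4`. -/
noncomputable def Lmap (x1 x2 : F4) : F4 →ₗ[ZMod 2] F4 where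
  toFun x := x1 * x + x2 * x ^ 2
  map_add' x y := by
    have h : (x + y) ^ 2 = x ^ 2 + y ^ 2 := add_pow_char x y 2
    show x1 * (x + y) + x2 * (x + y) ^ 2 = (x1 * x + x2 * x ^ 2) + (x1 * y + x2 * y ^ 2)
    rw [h]; ring
  map_smul' c x := by
    have hc : c ^ 2 = c := ZMod.pow_card c
    simp only [Algebra.smul_def, RingHom.id_apply, mul_pow, ← map_pow, hc]
    ring

/-- `F2`-rank of an `F2`-linear endomorphism of `F4`. -/
noncomputable def rk (f : F4 →ₗ[ZMod 2] F4) : ℕ :=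
  Module.finrank (ZMod 2) (LinearMap.range f)

/-- Sum-rank weight of `a1*x + a2*x^2`. -/
noncomputable def srWt {ℓ : ℕ} (a1 a2 : Fin ℓ → F4) : ℕ :=
  ∑ i, rk (Lmap (a1 i) (a2 i))

/-!
Since `x1 * x + x2 * x ^ 2 = x * (x1 + x2 * x)`, the kernel of `Lmap x1 x2` is all of `F4` when
both coefficients vanish, `{0}` when exactly one does, and `{0, -x1 / x2}` when neither does.
As `F4` is `2`-dimensional over `F2`, rank–nullity gives ranks `0`, `2` and `1`, and the weight
is the sum of these over the coordinates.
-/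

open LinearMap

lemma finrank_F4 : Module.finrank (ZMod 2) F4 = 2 := GaloisField.finrank 2 two_ne_zero

lemma rk_add_finrank_ker (f : F4 →ₗ[ZMod 2] F4) : rk f + Module.finrank (ZMod 2) (ker f) = 2 := by
  rw [rk, finrank_range_add_finrank_ker, finrank_F4]

lemma rk_eq_two_of_ker_eq_bot {f : F4 →ₗ[ZMod 2] F4} (h : ker f = ⊥) : rk f = 2 := by
  have := rk_add_finrank_ker f
  rwa [h, finrank_bot, add_zero] at this

lemma Lmap_apply (x1 x2 x : F4) : Lmap x1 x2 x = x1 * x + x2 * x ^ 2 := rfl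

lemma mem_ker_Lmap_iff {x1 x2 x : F4} : x ∈ ker (Lmap x1 x2) ↔ x = 0 ∨ x1 + x2 * x = 0 := by
  rw [mem_ker, Lmap_apply, ← mul_eq_zero]
  ring_nf

lemma rk_Lmap_zero_zero : rk (Lmap 0 0) = 0 := by
  have h : Lmap 0 0 = 0 := by ext x; simp [Lmap_apply]
  simp [rk, h]

lemma rk_Lmap_zero_right {x1 : F4} (h1 : x1 ≠ 0) : rk (Lmap x1 0) = 2 :=
  rk_eq_two_of_ker_eq_bot <| (Submodule.eq_bot_iff _).2 fun x hx => by
    simpa [h1] using mem_ker_Lmap_iff.1 hx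

lemma rk_Lmap_zero_left {x2 : F4} (h2 : x2 ≠ 0) : rk (Lmap 0 x2) = 2 :=
  rk_eq_two_of_ker_eq_bot <| (Submodule.eq_bot_iff _).2 fun x hx => by
    simpa [h2] using mem_ker_Lmap_iff.1 hx

lemma coe_ker_Lmap {x1 x2 : F4} (h2 : x2 ≠ 0) :
    (ker (Lmap x1 x2) : Set F4) = {0, -x1 / x2} := by
  ext x
  rw [SetLike.mem_coe, mem_ker_Lmap_iff, Set.mem_insert_iff, Set.mem_singleton_iff, eq_div_iff h2]
  constructor <;> rintro (h | h) <;> [left; right; left; right] <;> linear_combination h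

lemma rk_Lmap_of_ne_zero {x1 x2 : F4} (h1 : x1 ≠ 0) (h2 : x2 ≠ 0) : rk (Lmap x1 x2) = 1 := by
  have hcard : Nat.card (ker (Lmap x1 x2)) = 2 := by
    rw [← SetLike.coe_sort_coe, coe_ker_Lmap h2, Nat.card_eq_card_toFinset]
    simp [h1, h2, eq_comm (a := (0 : F4))]
  have hker : Module.finrank (ZMod 2) (ker (Lmap x1 x2)) = 1 := by
    rw [Module.natCard_eq_pow_finrank (K := ZMod 2), Nat.card_zmod] at hcard
    exact Nat.pow_right_injective le_rfl (hcard.trans (pow_one 2).symm)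
  have := rk_add_finrank_ker (Lmap x1 x2)
  omega

theorem stmt4 {ℓ : ℕ} (a1 a2 : Fin ℓ → F4) :
    srWt a1 a2 =
      2 * (Finset.univ.filter (fun i => a1 i ≠ 0 ∧ a2 i = 0)).card +
        2 * (Finset.univ.filter (fun i => a1 i = 0 ∧ a2 i ≠ 0)).card +
        (Finset.univ.filter (fun i => a1 i ≠ 0 ∧ a2 i ≠ 0)).card := by
  simp only [srWt, Finset.card_filter, Finset.mul_sum, ← Finset.sum_add_distrib]
  refine Finset.sum_congr rfl fun i _ => ?_
  by_cases h1 : a1 i = 0 <;> by_cases h2 : a2 i = 0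
  · simp [h1, h2, rk_Lmap_zero_zero]
  · simp [h1, h2, rk_Lmap_zero_left h2]
  · simp [h1, h2, rk_Lmap_zero_right h1]
  · simp [h1, h2, rk_Lmap_of_ne_zero h1 h2]
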